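/- arXiv:2605.03691 — 6 statements merged into one kernel-verified Lean document; each statement's English description precedes it below -/
import Mathlib

section
/- Let n ≥ 1 and let M be an n×n integer matrix every entry of which is 1 or −1. Then 2^(n−1) divides the determinant of M. -/
/-- If `n ≥ 1` and every entry of the `n × n` integer matrix `M` is `1` or `-1`,
then `2 ^ (n - 1)` divides `det M`. -/
theorem stmt_3 (n : ℕ) (hn : 1 ≤ n) (M : Matrix (Fin n) (Fin n) ℤ)
    (hM : ∀ i j, M i j = 1 ∨ M i j = -1) :
    (2 : ℤ) ^ (n - 1) ∣ M.det := by
  haveI : NeZero n := ⟨by omega⟩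
  -- D: column 0 is M's column 0; other columns are (M col j - M col 0)/2
  set D : Matrix (Fin n) (Fin n) ℤ :=
    Matrix.of fun i j => if j = 0 then M i j else (M i j - M i 0) / 2 with hD
  set N : Matrix (Fin n) (Fin n) ℤ :=
    Matrix.of fun i j => (if j = 0 then (1:ℤ) else 2) * D i j with hN
  have key : ∀ i j, (j : Fin n) ≠ 0 → 2 * ((M i j - M i 0) / 2) = M i j - M i 0 := by
    intro i j _
    rcases hM i j with h1 | h1 <;> rcases hM i 0 with h2 | h2 <;> rw [h1, h2] <;> norm_num
  have hNM : N.det = M.det := by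
    rw [← Matrix.det_transpose N, ← Matrix.det_transpose M]
    apply Matrix.det_eq_of_forall_row_eq_smul_add_const (fun j => if j = 0 then 0 else (-1:ℤ)) 0
      (by simp)
    intro j i
    simp only [Matrix.transpose_apply, hN, hD, Matrix.of_apply]
    by_cases hj : j = 0
    · simp [hj]
    · simp only [hj, if_neg hj, if_false]
      rw [key i j hj]; ring
  have hdet : N.det = (∏ j : Fin n, (if j = 0 then (1:ℤ) else 2)) * D.det :=
    Matrix.det_mul_row _ D
  have hprod : (∏ j : Fin n, (if j = 0 then (1:ℤ) else 2)) = 2 ^ (n - 1) := by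
    rw [← Finset.prod_erase_mul Finset.univ _ (Finset.mem_univ (0 : Fin n)), if_pos rfl,
      mul_one, Finset.prod_congr rfl (fun j hj => if_neg (Finset.ne_of_mem_erase hj)),
      Finset.prod_const, Finset.card_erase_of_mem (Finset.mem_univ _), Finset.card_univ,
      Fintype.card_fin]
  rw [← hNM, hdet, hprod]
  exact Dvd.intro _ rfl
end

section
/- Fix an integer k ≥ 2. The number of triples (a, b, c) of integers with 1 ≤ a ≤ k−1, 1 ≤ b ≤ k−1, 1 ≤ c ≤ k−1 and a·k − b·c ∈ {1, −1} is exactly 2·φ(k) − 1, where φ is the Euler totient function. (Equivalently, the number of 2×2 integer matrices ((a,b),(c,k)) with positive entries, determinant ±1, and k strictly exceeding a, b, c is 2·φ(k) − 1.) -/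
private lemma coprime_of_sol {k a b c : ℕ} {ε : ℤ} (hε : ε = 1 ∨ ε = -1)
    (h : (a : ℤ) * k - b * c = ε) : Nat.Coprime b k := by
  have h2 : IsCoprime (b : ℤ) (k : ℤ) := by
    rcases hε with rfl | rfl
    · exact ⟨-c, a, by linear_combination h⟩
    · exact ⟨c, -a, by linear_combination -h⟩
  rwa [Int.isCoprime_iff_gcd_eq_one, Int.gcd_natCast_natCast] at h2

private lemma sol_uniq {k : ℕ} (hk : 2 ≤ k) {ε : ℤ} {a b c a' c' : ℕ}
    (hc1 : 1 ≤ c) (hc2 : c ≤ k - 1) (hc1' : 1 ≤ c') (hc2' : c' ≤ k - 1)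
    (hcop : Nat.Coprime b k)
    (h1 : (a : ℤ) * k - b * c = ε) (h2 : (a' : ℤ) * k - b * c' = ε) :
    a = a' ∧ c = c' := by
  have hcopZ : IsCoprime (k : ℤ) (b : ℤ) := by
    rw [Int.isCoprime_iff_gcd_eq_one, Int.gcd_natCast_natCast]
    exact (Nat.coprime_comm.mp hcop)
  have hdvd : (k : ℤ) ∣ (b : ℤ) * ((c : ℤ) - c') := ⟨(a : ℤ) - a', by linear_combination h2 - h1⟩
  have hdc : (k : ℤ) ∣ (c : ℤ) - c' := hcopZ.dvd_of_dvd_mul_left hdvd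
  have hcc : (c : ℤ) - c' = 0 := by
    apply Int.eq_zero_of_abs_lt_dvd hdc
    rw [abs_lt]
    constructor <;> [skip; skip] <;>
    · omega
  have hc : c = c' := by omega
  subst hc
  have : (a : ℤ) * k = (a' : ℤ) * k := by linear_combination h1 - h2
  have hkne : (k : ℤ) ≠ 0 := by positivity
  have : (a : ℤ) = a' := by
    rw [mul_eq_mul_right_iff] at this
    rcases this with h | h
    · exact_mod_cast h
    · omega
  exact ⟨by exact_mod_cast this, rfl⟩

private lemma exists_sol {k b : ℕ} (hk : 2 ≤ k) (hb1 : 1 ≤ b) (hb2 : b ≤ k - 1)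
    (hcop : Nat.Coprime b k) (ε : ℤ) (hε : ε = 1 ∨ ε = -1) (hbe : ε = -1 → b ≠ 1) :
    ∃ a c : ℕ, (1 ≤ a ∧ a ≤ k - 1) ∧ (1 ≤ c ∧ c ≤ k - 1) ∧ (a : ℤ) * k - b * c = ε := by
  haveI : Fact (1 < k) := ⟨hk⟩
  haveI : NeZero k := ⟨by omega⟩
  set u := ZMod.unitOfCoprime b hcop with hu
  set x : ZMod k := ((-ε : ℤ) : ZMod k) * ↑u⁻¹ with hx
  have hbu : (b : ZMod k) = ↑u := (ZMod.coe_unitOfCoprime b hcop).symm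
  have hux : (b : ZMod k) * x = ((-ε : ℤ) : ZMod k) := by
    rw [hx, hbu, mul_left_comm, ← Units.val_mul, mul_inv_cancel]
    simp
  have hxne : x ≠ 0 := by
    intro h0
    have h1 : (b : ZMod k) * x = 0 := by rw [h0, mul_zero]
    rw [hux] at h1
    rcases hε with rfl | rfl <;> norm_num at h1
  set c : ℕ := x.val with hc
  have hcx : (c : ZMod k) = x := ZMod.natCast_rightInverse x
  have hc1 : 1 ≤ c := by
    rcases Nat.eq_zero_or_pos c with h | h
    · exact absurd ((ZMod.val_eq_zero x).mp h) hxne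
    · exact h
  have hc2 : c ≤ k - 1 := by have := ZMod.val_lt x; omega
  have hdvd : (k : ℤ) ∣ ((b : ℤ) * c + ε) := by
    rw [← ZMod.intCast_zmod_eq_zero_iff_dvd]
    push_cast
    rw [hcx, hux]
    push_cast
    ring
  obtain ⟨m, hm⟩ := hdvd
  have hbc1 : 1 ≤ b * c := Nat.one_le_iff_ne_zero.mpr (by positivity)
  have hbcne : ε = -1 → b * c ≠ 1 := by
    intro hε1
    intro h1
    have hble : b ≤ 1 := Nat.le_of_dvd one_pos ⟨c, h1.symm⟩
    exact hbe hε1 (by omega)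
  have hpos : 1 ≤ (b : ℤ) * c + ε := by
    rcases hε with rfl | rfl
    · have : 1 ≤ (b : ℤ) * c := by exact_mod_cast hbc1
      linarith
    · have h2 : 2 ≤ b * c := by
        have := hbcne rfl
        omega
      have : (2 : ℤ) ≤ (b : ℤ) * c := by exact_mod_cast h2
      linarith
  have hub : (b : ℤ) * c + ε ≤ (k : ℤ) * (k - 1) := by
    have hb2' : (b : ℤ) ≤ (k : ℤ) - 1 := by omega
    have hc2' : (c : ℤ) ≤ (k : ℤ) - 1 := by omega
    have hb0 : (0 : ℤ) ≤ b := by positivity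
    have hc0 : (0 : ℤ) ≤ c := by positivity
    have hk' : (2 : ℤ) ≤ k := by exact_mod_cast hk
    have hbc : (b : ℤ) * c ≤ ((k : ℤ) - 1) * ((k : ℤ) - 1) := by
      exact mul_le_mul hb2' hc2' hc0 (by linarith)
    rcases hε with rfl | rfl <;> nlinarith
  have hk0 : (0 : ℤ) < k := by exact_mod_cast (by omega : 0 < k)
  have hm1 : 1 ≤ m := by
    by_contra h
    push_neg at h
    have hkm : (k : ℤ) * m ≤ 0 :=
      mul_nonpos_of_nonneg_of_nonpos (le_of_lt hk0) (by omega)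
    linarith
  have hm2 : m ≤ (k : ℤ) - 1 := by
    by_contra h
    push_neg at h
    have hkm : (k : ℤ) * ((k : ℤ) - 1) < (k : ℤ) * m := by
      apply mul_lt_mul_of_pos_left h hk0
    linarith
  refine ⟨m.toNat, c, ⟨?_, ?_⟩, ⟨hc1, hc2⟩, ?_⟩
  · omega
  · have : (m.toNat : ℤ) = m := Int.toNat_of_nonneg (by omega)
    omega
  · have hmt : (m.toNat : ℤ) = m := Int.toNat_of_nonneg (by omega)
    rw [hmt]
    linarith [hm]

/-- For `k ≥ 2`, the number of triples `(a, b, c)` with `1 ≤ a, b, c ≤ k - 1`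
and `a * k - b * c = ±1` is exactly `2 * φ(k) - 1`. -/
theorem stmt_4 (k : ℕ) (hk : 2 ≤ k) :
    ((Finset.Icc 1 (k - 1) ×ˢ Finset.Icc 1 (k - 1) ×ˢ Finset.Icc 1 (k - 1)).filter
        (fun t : ℕ × ℕ × ℕ =>
          (t.1 : ℤ) * k - t.2.1 * t.2.2 = 1 ∨ (t.1 : ℤ) * k - t.2.1 * t.2.2 = -1)).card
      = 2 * Nat.totient k - 1 := by
  classical
  set I := Finset.Icc 1 (k - 1) with hI
  set B := I.filter (fun b => Nat.Coprime b k) with hBdef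
  have hB : B.card = Nat.totient k := by
    rw [Nat.totient]
    congr 1
    ext x
    simp only [hBdef, hI, Finset.mem_filter, Finset.mem_Icc, Finset.mem_range]
    constructor
    · rintro ⟨⟨h1, h2⟩, h3⟩
      exact ⟨by omega, Nat.coprime_comm.mp h3⟩
    · rintro ⟨h1, h3⟩
      have hx0 : x ≠ 0 := by
        rintro rfl
        rw [Nat.coprime_zero_right] at h3
        omega
      exact ⟨⟨by omega, by omega⟩, Nat.coprime_comm.mp h3⟩
  rw [Finset.filter_or]
  rw [Finset.card_union_of_disjoint (by
    rw [Finset.disjoint_left]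
    intro t ht1 ht2
    simp only [Finset.mem_filter] at ht1 ht2
    have := ht1.2.symm.trans ht2.2
    norm_num at this)]
  have hmemp : ∀ t : ℕ × ℕ × ℕ, t ∈ I ×ˢ I ×ˢ I ↔
      (1 ≤ t.1 ∧ t.1 ≤ k - 1) ∧ (1 ≤ t.2.1 ∧ t.2.1 ≤ k - 1) ∧ (1 ≤ t.2.2 ∧ t.2.2 ≤ k - 1) := by
    intro t
    simp [hI, Finset.mem_product, Finset.mem_Icc]
  have hplus : ((I ×ˢ I ×ˢ I).filter
      (fun t : ℕ × ℕ × ℕ => (t.1 : ℤ) * k - t.2.1 * t.2.2 = 1)).card = B.card := by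
    apply Finset.card_bij (fun t _ => t.2.1)
    · intro t ht
      rw [Finset.mem_filter] at ht
      rw [hmemp] at ht
      simp only [hBdef, Finset.mem_filter, hI, Finset.mem_Icc]
      exact ⟨⟨ht.1.2.1.1, ht.1.2.1.2⟩, coprime_of_sol (Or.inl rfl) ht.2⟩
    · rintro ⟨a, b, c⟩ ht ⟨a', b', c'⟩ ht' h
      simp only at h
      subst h
      rw [Finset.mem_filter, hmemp] at ht ht'
      obtain ⟨hA, hC⟩ := sol_uniq hk ht.1.2.2.1 ht.1.2.2.2 ht'.1.2.2.1 ht'.1.2.2.2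
        (coprime_of_sol (Or.inl rfl) ht.2) ht.2 ht'.2
      exact Prod.ext hA (Prod.ext rfl hC)
    · intro b hb
      simp only [hBdef, Finset.mem_filter, hI, Finset.mem_Icc] at hb
      obtain ⟨a, c, ha, hc, heq⟩ := exists_sol hk hb.1.1 hb.1.2 hb.2 1 (Or.inl rfl)
        (by intro h; norm_num at h)
      refine ⟨(a, b, c), ?_, rfl⟩
      rw [Finset.mem_filter, hmemp]
      exact ⟨⟨ha, hb.1, hc⟩, heq⟩
  have hminus : ((I ×ˢ I ×ˢ I).filter
      (fun t : ℕ × ℕ × ℕ => (t.1 : ℤ) * k - t.2.1 * t.2.2 = -1)).card = (B.erase 1).card := by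
    apply Finset.card_bij (fun t _ => t.2.1)
    · intro t ht
      rw [Finset.mem_filter] at ht
      rw [hmemp] at ht
      have hbne : t.2.1 ≠ 1 := by
        intro h1
        obtain ⟨⟨ha1, ha2⟩, ⟨hb1, hb2⟩, ⟨hcc1, hcc2⟩⟩ := ht.1
        have heq := ht.2
        rw [h1] at heq
        push_cast at heq
        have : (t.2.2 : ℤ) = (t.1 : ℤ) * k + 1 := by linarith
        have hklb : (t.1 : ℤ) * k ≥ k := by
          have : (1 : ℤ) ≤ t.1 := by exact_mod_cast ha1
          nlinarith [show (0:ℤ) < (k:ℤ) from by exact_mod_cast (by omega : 0 < k)]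
        have hcub : (t.2.2 : ℤ) ≤ (k : ℤ) - 1 := by omega
        have hk' : (2 : ℤ) ≤ k := by exact_mod_cast hk
        linarith
      rw [Finset.mem_erase]
      refine ⟨hbne, ?_⟩
      simp only [hBdef, Finset.mem_filter, hI, Finset.mem_Icc]
      exact ⟨⟨ht.1.2.1.1, ht.1.2.1.2⟩, coprime_of_sol (Or.inr rfl) ht.2⟩
    · rintro ⟨a, b, c⟩ ht ⟨a', b', c'⟩ ht' h
      simp only at h
      subst h
      rw [Finset.mem_filter, hmemp] at ht ht'
      obtain ⟨hA, hC⟩ := sol_uniq hk ht.1.2.2.1 ht.1.2.2.2 ht'.1.2.2.1 ht'.1.2.2.2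
        (coprime_of_sol (Or.inr rfl) ht.2) ht.2 ht'.2
      exact Prod.ext hA (Prod.ext rfl hC)
    · intro b hb
      rw [Finset.mem_erase] at hb
      obtain ⟨hbne, hb⟩ := hb
      simp only [hBdef, Finset.mem_filter, hI, Finset.mem_Icc] at hb
      obtain ⟨a, c, ha, hc, heq⟩ := exists_sol hk hb.1.1 hb.1.2 hb.2 (-1) (Or.inr rfl)
        (fun _ => hbne)
      refine ⟨(a, b, c), ?_, rfl⟩
      rw [Finset.mem_filter, hmemp]
      exact ⟨⟨ha, hb.1, hc⟩, heq⟩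
  have h1mem : (1 : ℕ) ∈ B := by
    simp only [hBdef, Finset.mem_filter, hI, Finset.mem_Icc]
    exact ⟨⟨le_refl 1, by omega⟩, Nat.coprime_one_left k⟩
  have hφpos : 1 ≤ Nat.totient k := Nat.totient_pos.mpr (by omega)
  rw [hplus, hminus, Finset.card_erase_of_mem h1mem, hB]
  omega
end

section
/- Let k ≥ 2 and let ε ∈ {1, −1}. Suppose a, b, c and a′, b, c′ are integers with 1 ≤ a, a′, c, c′ ≤ k−1 satisfying a·k − b·c = ε and a′·k − b·c′ = ε. Then a = a′ and c = c′. (That is, the sign ε together with the entry b determines the 2×2 matrix ((a,b),(c,k)) uniquely.) -/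
/-- For `k ≥ 2` and `ε = ±1`, the sign `ε` and the entry `b` determine the
triple `(a, b, c)` with `1 ≤ a, c ≤ k - 1` and `a * k - b * c = ε` uniquely. -/
theorem stmt_8 (k ε a b c a' c' : ℤ) (hk : 2 ≤ k) (hε : ε = 1 ∨ ε = -1)
    (ha1 : 1 ≤ a) (ha2 : a ≤ k - 1) (hc1 : 1 ≤ c) (hc2 : c ≤ k - 1)
    (ha'1 : 1 ≤ a') (ha'2 : a' ≤ k - 1) (hc'1 : 1 ≤ c') (hc'2 : c' ≤ k - 1)
    (h : a * k - b * c = ε) (h' : a' * k - b * c' = ε) :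
    a = a' ∧ c = c' := by
  have hb : IsCoprime k b := by
    rcases hε with rfl | rfl
    · exact ⟨a, -c, by nlinarith⟩
    · exact ⟨-a, c, by nlinarith⟩
  have hd : k ∣ b * (c - c') := ⟨a - a', by ring_nf; nlinarith⟩
  have hd2 : k ∣ c - c' := hb.dvd_of_dvd_mul_left hd
  have hcc : c - c' = 0 := Int.eq_zero_of_abs_lt_dvd hd2
    (by rw [abs_sub_lt_iff]; constructor <;> linarith)
  have hc : c = c' := by linarith
  refine ⟨?_, hc⟩
  have hk0 : k ≠ 0 := by linarith
  have : a * k = a' * k := by rw [hc] at h; linarith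
  exact mul_right_cancel₀ hk0 this
end

section
/- There is no 3×3 unimodular integer matrix M such that every entry of M is nonzero with absolute value at most 2, and every entry of the integer inverse M⁻¹ is nonzero with absolute value at most 4. (Conjecture 1 of the paper, verified computationally: no 3×3 zerofree unimodular matrix has α = 2 and 2 ≤ β ≤ 4.) -/
def okZ (x : ℤ) : Bool := !(x == 0) && (x ≤ 4 : Bool) && (-4 ≤ x : Bool)

def vs : List ℤ := [1, -1, 2, -2]

def noSol : Bool :=
  vs.all fun a => vs.all fun b => vs.all fun d => vs.all fun e =>
    !(okZ (a*e - b*d)) ||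
    (vs.all fun c => vs.all fun f =>
      !(okZ (b*f - c*e) && okZ (-(a*f) + c*d)) ||
      (vs.all fun g => vs.all fun h =>
        !(okZ (d*h - e*g) && okZ (-(a*h) + b*g)) ||
        (vs.all fun i =>
          !((a*e*i - a*f*h - b*d*i + b*f*g + c*d*h - c*e*g == 1 ||
             a*e*i - a*f*h - b*d*i + b*f*g + c*d*h - c*e*g == -1) &&
            okZ (e*i - f*h) && okZ (-(b*i) + c*h) &&
            okZ (-(d*i) + f*g) && okZ (a*i - c*g)))))

set_option maxHeartbeats 4000000 in
lemma noSol_true : noSol = true := by decide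

lemma okZ_of {x : ℤ} (h1 : x ≠ 0) (h2 : |x| ≤ 4) : okZ x = true := by
  have := abs_le.mp h2
  simp [okZ]
  omega

lemma mem_vs {x : ℤ} (h1 : x ≠ 0) (h2 : |x| ≤ 2) : x ∈ vs := by
  have := abs_le.mp h2
  simp [vs]
  omega

lemma key (a b c d e f g h i : ℤ)
    (ha : a ∈ vs) (hb : b ∈ vs) (hc : c ∈ vs) (hd : d ∈ vs) (he : e ∈ vs)
    (hf : f ∈ vs) (hg : g ∈ vs) (hh : h ∈ vs) (hi : i ∈ vs)
    (hdet : a*e*i - a*f*h - b*d*i + b*f*g + c*d*h - c*e*g = 1 ∨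
            a*e*i - a*f*h - b*d*i + b*f*g + c*d*h - c*e*g = -1)
    (m1 : okZ (e*i - f*h) = true) (m2 : okZ (-(b*i) + c*h) = true)
    (m3 : okZ (b*f - c*e) = true) (m4 : okZ (-(d*i) + f*g) = true)
    (m5 : okZ (a*i - c*g) = true) (m6 : okZ (-(a*f) + c*d) = true)
    (m7 : okZ (d*h - e*g) = true) (m8 : okZ (-(a*h) + b*g) = true)
    (m9 : okZ (a*e - b*d) = true) : False := by
  have H := noSol_true
  simp only [noSol, List.all_eq_true, Bool.or_eq_true, Bool.not_eq_true',
    Bool.and_eq_false_iff] at H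
  rcases H a ha b hb d hd e he with H | H
  · simp [m9] at H
  · rcases H c hc f hf with H | H
    · rcases H with H | H
      · simp [m3] at H
      · simp [m6] at H
    · rcases H g hg h hh with H | H
      · rcases H with H | H
        · simp [m7] at H
        · simp [m8] at H
      · have HH := H i hi
        rcases hdet with hd' | hd' <;>
          simp [hd', m1, m2, m4, m5] at HH

/-- Conjecture 1: there is no `3 × 3` zerofree unimodular integer matrix with
all entries of absolute value at most `2` and all inverse entries of absolute
value at most `4`. -/
theorem stmt_11 :
    ¬ ∃ M : Matrix (Fin 3) (Fin 3) ℤ,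
      (M.det = 1 ∨ M.det = -1) ∧
      (∀ i j, M i j ≠ 0 ∧ |M i j| ≤ 2) ∧
      (∀ i j, M⁻¹ i j ≠ 0 ∧ |M⁻¹ i j| ≤ 4) := by
  rintro ⟨M, hdet, hM, hI⟩
  have hneg : Ring.inverse (-1 : ℤ) = -1 := by
    have h : Ring.inverse ((-1 : ℤˣ) : ℤ) = (((-1 : ℤˣ)⁻¹ : ℤˣ) : ℤ) := Ring.inverse_unit _
    simpa using h
  have hRi : Ring.inverse M.det = M.det := by
    rcases hdet with h | h <;> rw [h]
    · simp
    · exact hneg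
  have hinv : ∀ p q, M⁻¹ p q = M.det * M.adjugate p q := by
    intro p q
    rw [Matrix.inv_def, hRi, Matrix.smul_apply, smul_eq_mul]
  have hadj : ∀ p q, M.adjugate p q ≠ 0 ∧ |M.adjugate p q| ≤ 4 := by
    intro p q
    have h := hI p q
    rw [hinv p q] at h
    rcases hdet with h' | h' <;> rw [h'] at h
    · rw [one_mul] at h; exact h
    · rw [neg_one_mul] at h
      refine ⟨fun hz => h.1 (by rw [hz, neg_zero]), ?_⟩
      have := h.2; rwa [abs_neg] at this
  have hA := Matrix.adjugate_fin_three M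
  have k00 := hadj 0 0
  have k01 := hadj 0 1
  have k02 := hadj 0 2
  have k10 := hadj 1 0
  have k11 := hadj 1 1
  have k12 := hadj 1 2
  have k20 := hadj 2 0
  have k21 := hadj 2 1
  have k22 := hadj 2 2
  rw [show M.adjugate 0 0 = M 1 1 * M 2 2 - M 1 2 * M 2 1 from by rw [hA]; rfl] at k00
  rw [show M.adjugate 0 1 = -(M 0 1 * M 2 2) + M 0 2 * M 2 1 from by rw [hA]; rfl] at k01
  rw [show M.adjugate 0 2 = M 0 1 * M 1 2 - M 0 2 * M 1 1 from by rw [hA]; rfl] at k02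
  rw [show M.adjugate 1 0 = -(M 1 0 * M 2 2) + M 1 2 * M 2 0 from by rw [hA]; rfl] at k10
  rw [show M.adjugate 1 1 = M 0 0 * M 2 2 - M 0 2 * M 2 0 from by rw [hA]; rfl] at k11
  rw [show M.adjugate 1 2 = -(M 0 0 * M 1 2) + M 0 2 * M 1 0 from by rw [hA]; rfl] at k12
  rw [show M.adjugate 2 0 = M 1 0 * M 2 1 - M 1 1 * M 2 0 from by rw [hA]; rfl] at k20
  rw [show M.adjugate 2 1 = -(M 0 0 * M 2 1) + M 0 1 * M 2 0 from by rw [hA]; rfl] at k21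
  rw [show M.adjugate 2 2 = M 0 0 * M 1 1 - M 0 1 * M 1 0 from by rw [hA]; rfl] at k22
  rw [Matrix.det_fin_three] at hdet
  exact key (M 0 0) (M 0 1) (M 0 2) (M 1 0) (M 1 1) (M 1 2) (M 2 0) (M 2 1) (M 2 2)
    (mem_vs (hM 0 0).1 (hM 0 0).2) (mem_vs (hM 0 1).1 (hM 0 1).2)
    (mem_vs (hM 0 2).1 (hM 0 2).2) (mem_vs (hM 1 0).1 (hM 1 0).2)
    (mem_vs (hM 1 1).1 (hM 1 1).2) (mem_vs (hM 1 2).1 (hM 1 2).2)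
    (mem_vs (hM 2 0).1 (hM 2 0).2) (mem_vs (hM 2 1).1 (hM 2 1).2)
    (mem_vs (hM 2 2).1 (hM 2 2).2) hdet
    (okZ_of k00.1 k00.2) (okZ_of k01.1 k01.2) (okZ_of k02.1 k02.2)
    (okZ_of k10.1 k10.2) (okZ_of k11.1 k11.2) (okZ_of k12.1 k12.2)
    (okZ_of k20.1 k20.2) (okZ_of k21.1 k21.2) (okZ_of k22.1 k22.2)
end

section
/- There is no 5×5 unimodular integer matrix M such that every entry of M is nonzero with absolute value at most 2 and every entry of the integer inverse M⁻¹ is nonzero with absolute value at most 2. (Conjecture 3 of the paper, verified computationally: no 5×5 zerofree unimodular matrix has α = β = 2.) -/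
set_option maxRecDepth 4000

private lemma sq1 : ∀ x : ZMod 3, x ≠ 0 → x * x = 1 := by decide

private lemma castne : ∀ x : ℤ, x ≠ 0 → |x| ≤ 2 → ((x : ZMod 3) ≠ 0) := by
  intro x hx hle
  have h := abs_le.mp hle
  have : x = -2 ∨ x = -1 ∨ x = 1 ∨ x = 2 := by omega
  rcases this with h|h|h|h <;> subst h <;> decide

private lemma wlem : ∀ w : Fin 5 → ZMod 3, (∀ m, w m ≠ 0) → (∑ m, w m) = 0 →
    ∃ c k, c ≠ 0 ∧ ∀ m, w m = c * (1 + if m = k then 1 else 0) := by decide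

private lemma L2 : ∀ (c c' : ZMod 3) (k l k' l' : Fin 5), c ≠ 0 → c' ≠ 0 → k ≠ l → k' ≠ l' →
    (∀ m : Fin 5, c * ((1 + if m = k then 1 else 0) * (1 + if m = l then 1 else 0)) =
      c' * ((1 + if m = k' then 1 else 0) * (1 + if m = l' then 1 else 0))) →
    ((k = k' ∧ l = l') ∨ (k = l' ∧ l = k')) := by decide

private lemma flem : ∀ a b c d e f : Fin 5, a ≠ b → a ≠ c → b ≠ c →
    ((a = b ∧ d = e) ∨ (a = e ∧ d = b)) →
    ((a = c ∧ d = f) ∨ (a = f ∧ d = c)) →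
    ((b = c ∧ e = f) ∨ (b = f ∧ e = c)) → False := by decide

private lemma iteone (m k : Fin 5) :
    ((1 + if m = k then (1:ZMod 3) else 0) * (1 + if m = k then 1 else 0)) = 1 := by
  rcases eq_or_ne m k with h|h <;> simp [h] <;> decide

/-- If two `w`-vectors in the same column share the same special coordinate,
we get a contradiction. Stated for plain functions so it can also be applied
to the transposed situation. -/
private lemma coldist (A B : Fin 5 → Fin 5 → ZMod 3) (i i' j k : Fin 5)
    (c c' : ZMod 3) (hc : c ≠ 0) (hc' : c' ≠ 0)
    (hBj : ∀ m, B m j ≠ 0) (hAi' : ∀ m, A i' m ≠ 0)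
    (h1 : ∀ m, A i m * B m j = c * (1 + if m = k then 1 else 0))
    (h2 : ∀ m, A i' m * B m j = c' * (1 + if m = k then 1 else 0))
    (hz : ∑ m, A i m * B m i' = 0) (ho : ∑ m, A i' m * B m i' = 1) : False := by
  have hAA : ∀ m, A i m * A i' m = c * c' := by
    intro m
    have e3 : (A i m * B m j) * (A i' m * B m j)
        = A i m * A i' m * (B m j * B m j) := by ring
    rw [sq1 _ (hBj m), mul_one] at e3
    rw [← e3, h1, h2]
    calc c * (1 + if m = k then (1:ZMod 3) else 0) * (c' * (1 + if m = k then 1 else 0))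
        = c * c' * ((1 + if m = k then (1:ZMod 3) else 0) * (1 + if m = k then 1 else 0)) := by
          ring
      _ = c * c' := by rw [iteone, mul_one]
  have hAi : ∀ m, A i m = c * c' * A i' m := by
    intro m
    calc A i m = A i m * (A i' m * A i' m) := by rw [sq1 _ (hAi' m), mul_one]
      _ = (A i m * A i' m) * A i' m := by ring
      _ = c * c' * A i' m := by rw [hAA m]
  have : (0 : ZMod 3) = c * c' := by
    rw [← hz]
    calc ∑ m, A i m * B m i' = ∑ m, c * c' * (A i' m * B m i') := by
          apply Finset.sum_congr rfl; intro m _; rw [hAi m]; ring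
      _ = c * c' * ∑ m, A i' m * B m i' := by rw [← Finset.mul_sum]
      _ = c * c' := by rw [ho, mul_one]
  exact mul_ne_zero hc hc' this.symm

/-- From two columns against the same two rows, the special-coordinate pairs agree. -/
private lemma pairlem (A B : Fin 5 → Fin 5 → ZMod 3) (i i' j j' : Fin 5)
    (k1 k2 k3 k4 : Fin 5) (c1 c2 c3 c4 : ZMod 3)
    (hc1 : c1 ≠ 0) (hc2 : c2 ≠ 0) (hc3 : c3 ≠ 0) (hc4 : c4 ≠ 0)
    (hk12 : k1 ≠ k2) (hk34 : k3 ≠ k4)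
    (hBj : ∀ m, B m j ≠ 0) (hBj' : ∀ m, B m j' ≠ 0)
    (h1 : ∀ m, A i m * B m j = c1 * (1 + if m = k1 then 1 else 0))
    (h2 : ∀ m, A i' m * B m j = c2 * (1 + if m = k2 then 1 else 0))
    (h3 : ∀ m, A i m * B m j' = c3 * (1 + if m = k3 then 1 else 0))
    (h4 : ∀ m, A i' m * B m j' = c4 * (1 + if m = k4 then 1 else 0)) :
    ((k1 = k3 ∧ k2 = k4) ∨ (k1 = k4 ∧ k2 = k3)) := by
  have key : ∀ m : Fin 5,
      c1 * c2 * ((1 + if m = k1 then 1 else 0) * (1 + if m = k2 then 1 else 0)) =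
      c3 * c4 * ((1 + if m = k3 then 1 else 0) * (1 + if m = k4 then 1 else 0)) := by
    intro m
    have e1 : (A i m * B m j) * (A i' m * B m j)
        = A i m * A i' m * (B m j * B m j) := by ring
    rw [sq1 _ (hBj m), mul_one] at e1
    have e2 : (A i m * B m j') * (A i' m * B m j')
        = A i m * A i' m * (B m j' * B m j') := by ring
    rw [sq1 _ (hBj' m), mul_one] at e2
    calc c1 * c2 * ((1 + if m = k1 then (1:ZMod 3) else 0) * (1 + if m = k2 then 1 else 0))
        = (c1 * (1 + if m = k1 then 1 else 0)) * (c2 * (1 + if m = k2 then 1 else 0)) := by ring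
      _ = (A i m * B m j) * (A i' m * B m j) := by rw [h1, h2]
      _ = A i m * A i' m := e1
      _ = (A i m * B m j') * (A i' m * B m j') := e2.symm
      _ = (c3 * (1 + if m = k3 then 1 else 0)) * (c4 * (1 + if m = k4 then 1 else 0)) := by
          rw [h3, h4]
      _ = c3 * c4 * ((1 + if m = k3 then 1 else 0) * (1 + if m = k4 then 1 else 0)) := by ring
  exact L2 (c1 * c2) (c3 * c4) k1 k2 k3 k4 (mul_ne_zero hc1 hc2) (mul_ne_zero hc3 hc4)
    hk12 hk34 key

/-- Main mod-3 lemma: no `5 × 5` matrices over `F₃` with all entries nonzero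
can multiply to the identity. -/
private lemma f3 (A B : Matrix (Fin 5) (Fin 5) (ZMod 3))
    (hA : ∀ i j, A i j ≠ 0) (hB : ∀ i j, B i j ≠ 0) : A * B ≠ 1 := by
  intro hAB
  have hprod : ∀ i j, ∑ m, A i m * B m j = if i = j then 1 else 0 := by
    intro i j
    have := congrFun (congrFun hAB i) j
    simpa [Matrix.mul_apply, Matrix.one_apply] using this
  have key : ∀ i j : Fin 5, i ≠ j →
      ∃ c k, c ≠ 0 ∧ ∀ m, A i m * B m j = c * (1 + if m = k then 1 else 0) := by
    intro i j hij
    refine wlem _ (fun m => mul_ne_zero (hA i m) (hB m j)) ?_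
    rw [hprod i j, if_neg hij]
  -- six instantiations: rows 0,1 and columns 2,3,4
  obtain ⟨c02, k02, hc02, h02⟩ := key 0 2 (by decide)
  obtain ⟨c03, k03, hc03, h03⟩ := key 0 3 (by decide)
  obtain ⟨c04, k04, hc04, h04⟩ := key 0 4 (by decide)
  obtain ⟨c12, k12, hc12, h12⟩ := key 1 2 (by decide)
  obtain ⟨c13, k13, hc13, h13⟩ := key 1 3 (by decide)
  obtain ⟨c14, k14, hc14, h14⟩ := key 1 4 (by decide)
  -- column distinctness : k0j ≠ k1j
  have hz01 : ∑ m, A 0 m * B m 1 = 0 := by rw [hprod]; decide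
  have ho11 : ∑ m, A 1 m * B m 1 = 1 := by rw [hprod]; decide
  have cd : ∀ j k (c c' : ZMod 3), c ≠ 0 → c' ≠ 0 →
      (∀ m, A 0 m * B m j = c * (1 + if m = k then 1 else 0)) →
      (∀ m, A 1 m * B m j = c' * (1 + if m = k then 1 else 0)) → False := by
    intro j k c c' hc hc' h1 h2
    exact coldist A B 0 1 j k c c' hc hc' (fun m => hB m j) (fun m => hA 1 m)
      h1 h2 hz01 ho11
  have d2 : k02 ≠ k12 := fun h => cd 2 k02 c02 c12 hc02 hc12 h02 (h ▸ h12)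
  have d3 : k03 ≠ k13 := fun h => cd 3 k03 c03 c13 hc03 hc13 h03 (h ▸ h13)
  have d4 : k04 ≠ k14 := fun h => cd 4 k04 c04 c14 hc04 hc14 h04 (h ▸ h14)
  -- row distinctness within row 0 : apply coldist to the transposed situation
  have rd : ∀ (j j' : Fin 5) k (c c' : ZMod 3), j ≠ j' → (j:Fin 5) ≠ j' → c ≠ 0 → c' ≠ 0 →
      (∀ m, A 0 m * B m j = c * (1 + if m = k then 1 else 0)) →
      (∀ m, A 0 m * B m j' = c' * (1 + if m = k then 1 else 0)) →
      (∑ m, B m j * A j' m = 0) → (∑ m, B m j' * A j' m = 1) → False := by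
    intro j j' k c c' _ _ hc hc' h1 h2 hz ho
    exact coldist (fun x y => B y x) (fun x y => A y x) j j' 0 k c c' hc hc'
      (fun m => hA 0 m) (fun m => hB m j')
      (fun m => by simpa [mul_comm] using h1 m)
      (fun m => by simpa [mul_comm] using h2 m) hz ho
  have sumswap : ∀ (j j' : Fin 5), j ≠ j' →
      (∑ m, B m j * A j' m = 0) ∧ (∑ m, B m j' * A j' m = 1) := by
    intro j j' hjj'
    constructor
    · have := hprod j' j
      rw [if_neg (Ne.symm hjj')] at this
      rw [← this]; exact Finset.sum_congr rfl fun m _ => mul_comm _ _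
    · have := hprod j' j'
      rw [if_pos rfl] at this
      rw [← this]; exact Finset.sum_congr rfl fun m _ => mul_comm _ _
  have r23 : k02 ≠ k03 := fun h => by
    obtain ⟨hz, ho⟩ := sumswap 2 3 (by decide)
    exact rd 2 3 k02 c02 c03 (by decide) (by decide) hc02 hc03 h02 (h ▸ h03) hz ho
  have r24 : k02 ≠ k04 := fun h => by
    obtain ⟨hz, ho⟩ := sumswap 2 4 (by decide)
    exact rd 2 4 k02 c02 c04 (by decide) (by decide) hc02 hc04 h02 (h ▸ h04) hz ho
  have r34 : k03 ≠ k04 := fun h => by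
    obtain ⟨hz, ho⟩ := sumswap 3 4 (by decide)
    exact rd 3 4 k03 c03 c04 (by decide) (by decide) hc03 hc04 h03 (h ▸ h04) hz ho
  -- pair equalities
  have p23 := pairlem A B 0 1 2 3 k02 k12 k03 k13 c02 c12 c03 c13
    hc02 hc12 hc03 hc13 d2 d3 (fun m => hB m 2) (fun m => hB m 3) h02 h12 h03 h13
  have p24 := pairlem A B 0 1 2 4 k02 k12 k04 k14 c02 c12 c04 c14
    hc02 hc12 hc04 hc14 d2 d4 (fun m => hB m 2) (fun m => hB m 4) h02 h12 h04 h14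
  have p34 := pairlem A B 0 1 3 4 k03 k13 k04 k14 c03 c13 c04 c14
    hc03 hc13 hc04 hc14 d3 d4 (fun m => hB m 3) (fun m => hB m 4) h03 h13 h04 h14
  exact flem k02 k03 k04 k12 k13 k14 r23 r24 r34 p23 p24 p34

/-- Conjecture 3: there is no `5 × 5` zerofree unimodular integer matrix with
`α = β = 2`. -/
theorem stmt_13 :
    ¬ ∃ M : Matrix (Fin 5) (Fin 5) ℤ,
      (M.det = 1 ∨ M.det = -1) ∧
      (∀ i j, M i j ≠ 0 ∧ |M i j| ≤ 2) ∧
      (∀ i j, M⁻¹ i j ≠ 0 ∧ |M⁻¹ i j| ≤ 2) := by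
  rintro ⟨M, hdet, hM, hMinv⟩
  have hu : IsUnit M.det := by
    rcases hdet with h|h <;> rw [h]
    · exact isUnit_one
    · exact IsUnit.neg isUnit_one
  have hmul : M * M⁻¹ = 1 := Matrix.mul_nonsing_inv M hu
  set f := Int.castRingHom (ZMod 3) with hf
  have hmap : M.map f * (M⁻¹).map f = 1 := by
    rw [← Matrix.map_mul, hmul, Matrix.map_one f (map_zero f) (map_one f)]
  exact f3 (M.map f) ((M⁻¹).map f)
    (fun i j => castne _ (hM i j).1 (hM i j).2)
    (fun i j => castne _ (hMinv i j).1 (hMinv i j).2) hmap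
end

section
/- The 7×7 integer matrix M with rows (1,1,1,1,1,2,2), (1,1,1,1,2,1,2), (1,1,1,1,2,2,1), (1,1,1,2,2,2,2), (1,1,2,1,2,2,2), (1,2,1,1,2,2,2), (2,1,1,1,2,2,2) is unimodular, and every entry of its integer inverse M⁻¹ is nonzero with absolute value at most 2. In particular, there exists a 7×7 zerofree unimodular matrix with all entries positive and α = β = 2. -/
set_option maxRecDepth 10000 in
/-- The given positive `7 × 7` matrix is unimodular and every entry of its
integer inverse is nonzero with absolute value at most `2`: a `7 × 7`
zerofree unimodular matrix with all entries positive and `α = β = 2`. -/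
theorem stmt_19 :
    ∃ M : Matrix (Fin 7) (Fin 7) ℤ,
      M = !![1, 1, 1, 1, 1, 2, 2;
             1, 1, 1, 1, 2, 1, 2;
             1, 1, 1, 1, 2, 2, 1;
             1, 1, 1, 2, 2, 2, 2;
             1, 1, 2, 1, 2, 2, 2;
             1, 2, 1, 1, 2, 2, 2;
             2, 1, 1, 1, 2, 2, 2] ∧
      (M.det = 1 ∨ M.det = -1) ∧
      (∀ i j, M⁻¹ i j ≠ 0 ∧ |M⁻¹ i j| ≤ 2) := by
  set M : Matrix (Fin 7) (Fin 7) ℤ :=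
    !![1, 1, 1, 1, 1, 2, 2;
       1, 1, 1, 1, 2, 1, 2;
       1, 1, 1, 1, 2, 2, 1;
       1, 1, 1, 2, 2, 2, 2;
       1, 1, 2, 1, 2, 2, 2;
       1, 2, 1, 1, 2, 2, 2;
       2, 1, 1, 1, 2, 2, 2] with hM
  set N : Matrix (Fin 7) (Fin 7) ℤ :=
    !![-2, -2, -2, 1, 1, 1, 2;
       -2, -2, -2, 1, 1, 2, 1;
       -2, -2, -2, 1, 2, 1, 1;
       -2, -2, -2, 2, 1, 1, 1;
        1,  2,  2, -1, -1, -1, -1;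
        2,  1,  2, -1, -1, -1, -1;
        2,  2,  1, -1, -1, -1, -1] with hN
  have hMN : M * N = 1 := by rw [hM, hN]; decide
  have hunit : IsUnit M.det := by
    apply IsUnit.of_mul_eq_one (a := M.det) N.det
    rw [← Matrix.det_mul, hMN, Matrix.det_one]
  have hinv : M⁻¹ = N := Matrix.inv_eq_right_inv hMN
  refine ⟨M, rfl, Int.isUnit_iff.mp hunit, ?_⟩
  rw [hinv, hN]
  intro i j
  fin_cases i <;> fin_cases j <;> decide
end
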